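/- arXiv:1005.4244 — 5 statements merged into one kernel-verified Lean document; each statement's English description precedes it below -/
import Mathlib

section
/- In a fractional assignment problem, if a feasible allocation x maximizes the total welfare ∑_{s,t} x^{st} w^{st}, then there exist nonnegative prices p^1,…,p^m that are envy-free with respect to x, i.e., x^{st} > 0 implies w^{st} − p^t = max_k (w^{sk} − p^k) ≥ 0. (The prices can be taken from an optimal solution of the dual linear program.) -/
/-!
The prices are shadow prices, obtained without LP duality. Call `d` a deviation from `x` if its
negative entries lie on the support of `x`; then `x + ε • d` is feasible for small `ε > 0` as soon
as the row and column sums of `d` are nonpositive, so by optimality such a `d` does not raise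
welfare. Let `p k` be the supremum of the welfare of deviations with nonpositive row sums whose
column sums are bounded by one extra unit of good `k`. If `x s t > 0`, subtracting the unit
`(s, t)` from such a deviation for `t` gives `p t ≤ w s t`, and moving that unit to `(s, k)` turns
it into a deviation for `k`, so `p t + w s k - w s t ≤ p k`: this is envy-freeness.
-/

open Finset Filter Topology

namespace FractionalAssignment

variable {ι κ : Type*}

theorem single_single_apply [DecidableEq ι] [DecidableEq κ] (s s' : ι) (t t' : κ) :
    (Pi.single s (Pi.single t 1) : ι → κ → ℝ) s' t' = if s' = s ∧ t' = t then 1 else 0 := by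
  by_cases hs : s' = s <;> simp [Pi.single_apply, hs]

theorem sum_single_single_apply_right [DecidableEq ι] [DecidableEq κ] [Fintype κ]
    (s s' : ι) (t : κ) :
    ∑ t', (Pi.single s (Pi.single t 1) : ι → κ → ℝ) s' t' = (Pi.single s 1 : ι → ℝ) s' := by
  simp [Pi.single_apply, ite_apply]

theorem sum_single_single_apply_left [DecidableEq ι] [DecidableEq κ] [Fintype ι]
    (s : ι) (t t' : κ) :
    ∑ s', (Pi.single s (Pi.single t 1) : ι → κ → ℝ) s' t' = (Pi.single t 1 : κ → ℝ) t' := by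
  simp [Pi.single_apply, ite_apply]

variable [Fintype ι] [Fintype κ]

def welfare (w : ι → κ → ℝ) : (ι → κ → ℝ) →ₗ[ℝ] ℝ where
  toFun z := ∑ s, ∑ t, z s t * w s t
  map_add' y z := by simp only [Pi.add_apply, add_mul, sum_add_distrib]
  map_smul' c z := by
    simp only [Pi.smul_apply, smul_eq_mul, mul_assoc, ← mul_sum, RingHom.id_apply]

theorem welfare_single [DecidableEq ι] [DecidableEq κ] (w : ι → κ → ℝ) (s : ι) (t : κ) :
    welfare w (Pi.single s (Pi.single t 1)) = w s t := by
  simp [welfare, Pi.single_apply, ite_apply]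

structure IsFeasible (α : ι → ℝ) (β : κ → ℝ) (z : ι → κ → ℝ) : Prop where
  nonneg : ∀ s t, 0 ≤ z s t
  row_le : ∀ s, ∑ t, z s t ≤ α s
  col_le : ∀ t, ∑ s, z s t ≤ β t

structure IsWelfareMaximizing (α : ι → ℝ) (β : κ → ℝ) (w x : ι → κ → ℝ) : Prop where
  feasible : IsFeasible α β x
  welfare_le : ∀ z, IsFeasible α β z → welfare w z ≤ welfare w x

/-- If `x` is feasible for the bounds `α`, `β`, then `x + ε • d` is feasible for `α + ε • a`,
`β + ε • b` when `ε > 0` is small (`IsFeasible.eventually_add_smul`). -/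
structure IsDeviation (x : ι → κ → ℝ) (a : ι → ℝ) (b : κ → ℝ) (d : ι → κ → ℝ) : Prop where
  pos_of_neg : ∀ s t, d s t < 0 → 0 < x s t
  row_le : ∀ s, ∑ t, d s t ≤ a s
  col_le : ∀ t, ∑ s, d s t ≤ b t

section Deviation

variable {x d : ι → κ → ℝ} {a a' : ι → ℝ} {b b' : κ → ℝ}

theorem isDeviation_zero (ha : 0 ≤ a) (hb : 0 ≤ b) : IsDeviation x a b 0 where
  pos_of_neg s t h := absurd h (lt_irrefl 0)
  row_le s := by simpa using ha s
  col_le t := by simpa using hb t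

theorem IsDeviation.mono (hd : IsDeviation x a b d) (ha : a ≤ a') (hb : b ≤ b') :
    IsDeviation x a' b' d where
  pos_of_neg := hd.pos_of_neg
  row_le s := (hd.row_le s).trans (ha s)
  col_le t := (hd.col_le t).trans (hb t)

variable [DecidableEq ι] [DecidableEq κ]

theorem IsDeviation.sub_single (hd : IsDeviation x a b d) {s : ι} {t : κ} (hst : 0 < x s t) :
    IsDeviation x (a - Pi.single s 1) (b - Pi.single t 1) (d - Pi.single s (Pi.single t 1)) where
  pos_of_neg s' t' h := by
    by_cases hs : s' = s ∧ t' = t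
    · rwa [hs.1, hs.2]
    · refine hd.pos_of_neg s' t' ?_
      simpa [single_single_apply, hs] using h
  row_le s' := by
    simp only [Pi.sub_apply, sum_sub_distrib, sum_single_single_apply_right]
    exact sub_le_sub_right (hd.row_le s') _
  col_le t' := by
    simp only [Pi.sub_apply, sum_sub_distrib, sum_single_single_apply_left]
    exact sub_le_sub_right (hd.col_le t') _

theorem IsDeviation.add_single (hd : IsDeviation x a b d) (s : ι) (t : κ) :
    IsDeviation x (a + Pi.single s 1) (b + Pi.single t 1) (d + Pi.single s (Pi.single t 1)) where
  pos_of_neg s' t' h := hd.pos_of_neg s' t' <| by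
    simp only [Pi.add_apply, single_single_apply] at h
    split_ifs at h <;> linarith
  row_le s' := by
    simp only [Pi.add_apply, sum_add_distrib, sum_single_single_apply_right]
    exact add_le_add (hd.row_le s') le_rfl
  col_le t' := by
    simp only [Pi.add_apply, sum_add_distrib, sum_single_single_apply_left]
    exact add_le_add (hd.col_le t') le_rfl

end Deviation

theorem IsFeasible.eventually_add_smul {α a : ι → ℝ} {β b : κ → ℝ} {x d : ι → κ → ℝ}
    (hx : IsFeasible α β x) (hd : IsDeviation x a b d) :
    ∀ᶠ ε in 𝓝[>] (0 : ℝ), IsFeasible (α + ε • a) (β + ε • b) (x + ε • d) := by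
  have hnonneg : ∀ᶠ ε in 𝓝[>] (0 : ℝ), ∀ s t, 0 ≤ x s t + ε * d s t := by
    refine eventually_all.2 fun s => eventually_all.2 fun t => ?_
    by_cases hdst : 0 ≤ d s t
    · filter_upwards [self_mem_nhdsWithin] with ε hε
      exact add_nonneg (hx.nonneg s t) (mul_nonneg (le_of_lt hε) hdst)
    · have hcont : Tendsto (fun ε => x s t + ε * d s t) (𝓝[>] 0) (𝓝 (x s t)) := by
        simpa using (tendsto_const_nhds.add (tendsto_id.mul_const (d s t))).mono_left
          (nhdsWithin_le_nhds (a := (0 : ℝ)))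
      filter_upwards [hcont.eventually_const_lt (hd.pos_of_neg s t (not_le.1 hdst))] with ε hε
      exact hε.le
  filter_upwards [self_mem_nhdsWithin, hnonneg] with ε hε hε'
  refine ⟨hε', fun s => ?_, fun t => ?_⟩
  · simp only [Pi.add_apply, Pi.smul_apply, smul_eq_mul, sum_add_distrib, ← mul_sum]
    exact add_le_add (hx.row_le s) (mul_le_mul_of_nonneg_left (hd.row_le s) (le_of_lt hε))
  · simp only [Pi.add_apply, Pi.smul_apply, smul_eq_mul, sum_add_distrib, ← mul_sum]
    exact add_le_add (hx.col_le t) (mul_le_mul_of_nonneg_left (hd.col_le t) (le_of_lt hε))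

section Optimality

variable {α : ι → ℝ} {β : κ → ℝ} {w x d : ι → κ → ℝ}

theorem IsWelfareMaximizing.welfare_nonpos (hx : IsWelfareMaximizing α β w x)
    (hd : IsDeviation x 0 0 d) : welfare w d ≤ 0 := by
  obtain ⟨ε, hfeas, hε⟩ :=
    ((hx.feasible.eventually_add_smul hd).and self_mem_nhdsWithin).exists
  simp only [smul_zero, add_zero] at hfeas
  have := hx.welfare_le _ hfeas
  rw [map_add, map_smul, smul_eq_mul, add_le_iff_nonpos_right] at this
  exact nonpos_of_mul_nonpos_right this hε

variable [DecidableEq ι] [DecidableEq κ]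

theorem IsWelfareMaximizing.welfare_le_of_isDeviation_single (hx : IsWelfareMaximizing α β w x)
    {s : ι} {t : κ} (hst : 0 < x s t) (hd : IsDeviation x 0 (Pi.single t 1) d) :
    welfare w d ≤ w s t := by
  have := hx.welfare_nonpos <| (hd.sub_single hst).mono (by simp) (sub_self _).le
  rwa [map_sub, welfare_single, sub_nonpos] at this

end Optimality

section ShadowPrice

variable [DecidableEq κ]

/-- Truncating at `B` only makes the supremum bounded (a junk `0` otherwise): once `B` bounds `w`,
it never binds on the deviations compared in `shadowPrice_add_le`. -/
noncomputable def shadowPrice (w x : ι → κ → ℝ) (B : ℝ) (k : κ) : ℝ :=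
  ⨆ d : {d // IsDeviation x 0 (Pi.single k 1) d}, min (welfare w d) B

variable {α : ι → ℝ} {β : κ → ℝ} {w x : ι → κ → ℝ} {B : ℝ}

instance (x : ι → κ → ℝ) (k : κ) : Nonempty {d // IsDeviation x 0 (Pi.single k 1) d} :=
  ⟨⟨0, isDeviation_zero le_rfl (Pi.single_nonneg.2 zero_le_one)⟩⟩

theorem bddAbove_range_min_welfare (w x : ι → κ → ℝ) (B : ℝ) (k : κ) :
    BddAbove (Set.range fun d : {d // IsDeviation x 0 (Pi.single k 1) d} => min (welfare w d) B) :=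
  ⟨B, Set.forall_mem_range.2 fun _ => min_le_right _ _⟩

theorem shadowPrice_nonneg (hB : 0 ≤ B) (k : κ) : 0 ≤ shadowPrice w x B k :=
  le_ciSup_of_le (bddAbove_range_min_welfare w x B k)
    ⟨0, isDeviation_zero le_rfl (Pi.single_nonneg.2 zero_le_one)⟩ (by simp [hB])

variable [DecidableEq ι]

theorem IsWelfareMaximizing.shadowPrice_le (hx : IsWelfareMaximizing α β w x) {s : ι} {t : κ}
    (hst : 0 < x s t) : shadowPrice w x B t ≤ w s t :=
  ciSup_le fun d => (min_le_left _ _).trans (hx.welfare_le_of_isDeviation_single hst d.2)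

theorem IsWelfareMaximizing.shadowPrice_add_le (hx : IsWelfareMaximizing α β w x) {s : ι}
    {t : κ} (hst : 0 < x s t) (k : κ) (hB : w s k ≤ B) :
    shadowPrice w x B t + w s k - w s t ≤ shadowPrice w x B k := by
  suffices shadowPrice w x B t ≤ shadowPrice w x B k - (w s k - w s t) by linarith
  refine ciSup_le fun ⟨d, hd⟩ => show min (welfare w d) B ≤ _ from ?_
  have hd' : IsDeviation x 0 (Pi.single k 1)
      (d - Pi.single s (Pi.single t 1) + Pi.single s (Pi.single k 1)) := by
    simpa using (hd.sub_single hst).add_single s k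
  have hd_le := hx.welfare_le_of_isDeviation_single hst hd
  have hwelfare : welfare w (d - Pi.single s (Pi.single t 1) + Pi.single s (Pi.single k 1)) =
      welfare w d - w s t + w s k := by
    rw [map_add, map_sub, welfare_single, welfare_single]
  have hle : min (welfare w _) B ≤ shadowPrice w x B k :=
    le_ciSup (bddAbove_range_min_welfare w x B k) ⟨_, hd'⟩
  rw [min_eq_left (by linarith)] at hle
  linarith [min_le_left (welfare w d) B]

end ShadowPrice

end FractionalAssignment

open FractionalAssignment

theorem welfare_maximizing_has_envy_free_prices_general
    (ℓ m : ℕ) (α : Fin ℓ → ℝ) (β : Fin m → ℝ) (w : Fin ℓ → Fin m → ℝ)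
    (x : Fin ℓ → Fin m → ℝ)
    (hx0 : ∀ s t, 0 ≤ x s t)
    (hrow : ∀ s, ∑ t, x s t ≤ α s)
    (hcol : ∀ t, ∑ s, x s t ≤ β t)
    (hopt : ∀ z : Fin ℓ → Fin m → ℝ,
      (∀ s t, 0 ≤ z s t) →
      (∀ s, ∑ t, z s t ≤ α s) →
      (∀ t, ∑ s, z s t ≤ β t) →
      ∑ s, ∑ t, z s t * w s t ≤ ∑ s, ∑ t, x s t * w s t) :
    ∃ p : Fin m → ℝ, (∀ t, 0 ≤ p t) ∧
      ∀ s t, 0 < x s t →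
        (0 ≤ w s t - p t ∧ ∀ k, w s k - p k ≤ w s t - p t) := by
  have hx : IsWelfareMaximizing α β w x :=
    ⟨⟨hx0, hrow, hcol⟩, fun z hz => hopt z hz.nonneg hz.row_le hz.col_le⟩
  obtain ⟨B, hB⟩ := Finite.bddAbove_range (Function.uncurry w)
  have hwB : ∀ s k, w s k ≤ max B 0 := fun s k =>
    (hB (Set.mem_range_self (s, k))).trans (le_max_left _ _)
  refine ⟨shadowPrice w x (max B 0), shadowPrice_nonneg (le_max_right _ _),
    fun s t hst => ⟨sub_nonneg.2 (hx.shadowPrice_le hst), fun k => ?_⟩⟩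
  linarith [hx.shadowPrice_add_le hst k (hwB s k)]

/-- If a feasible allocation of a fractional assignment problem maximizes total
welfare, then there exist nonnegative envy-free prices for it. -/
theorem welfare_maximizing_has_envy_free_prices
    (ℓ m : ℕ) (α : Fin ℓ → ℝ) (β : Fin m → ℝ) (w : Fin ℓ → Fin m → ℝ)
    (hα : ∀ s, 0 ≤ α s) (hβ : ∀ t, 0 ≤ β t) (hw : ∀ s t, 0 ≤ w s t)
    (x : Fin ℓ → Fin m → ℝ)
    (hx0 : ∀ s t, 0 ≤ x s t)
    (hrow : ∀ s, ∑ t, x s t ≤ α s)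
    (hcol : ∀ t, ∑ s, x s t ≤ β t)
    (hopt : ∀ z : Fin ℓ → Fin m → ℝ,
      (∀ s t, 0 ≤ z s t) →
      (∀ s, ∑ t, z s t ≤ α s) →
      (∀ t, ∑ s, z s t ≤ β t) →
      ∑ s, ∑ t, z s t * w s t ≤ ∑ s, ∑ t, x s t * w s t) :
    ∃ p : Fin m → ℝ, (∀ t, 0 ≤ p t) ∧
      ∀ s t, 0 < x s t →
        (0 ≤ w s t - p t ∧ ∀ k, w s k - p k ≤ w s t - p t) :=
  welfare_maximizing_has_envy_free_prices_general ℓ m α β w x hx0 hrow hcol hopt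
end

section
/- Let w^{st}_i, p^t_i (1 ≤ s,t ≤ ℓ) be reals with p chosen envy-free for an allocation x_i of the induced assignment problem of agent i (i.e., x^{st}_i > 0 implies w^{st}_i − p^t_i = max_k (w^{sk}_i − p^k_i)), and suppose x_i is market-clearing with row sums f_i(s) > 0. Define manipulated values w̃^{rs}_i = ∑_t (x^{st}_i / f_i(s)) w^{rt}_i and manipulated prices p̃^s_i = ∑_t (x^{st}_i / f_i(s)) p^t_i. Then for all r, s: w̃^{rs}_i − p̃^s_i ≤ max_k (w^{rk}_i − p^k_i), with equality when r = s. Consequently w̃^{ss}_i − p̃^s_i = max_t (w̃^{st}_i − p̃^t_i), i.e., the manipulated mechanism satisfies the (exact) BIC condition for agent i. -/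
/-! Writing `a s t = x s t / f s`, each row `a s` is a probability vector (row sums of `x` are `f`),
and `wt r s - pt s = ∑ t, a s t * (w r t - p t)` is the surplus of type `r` averaged over the goods
that the report `s` is allocated. An average never exceeds the maximum, and envy-freeness says that
type `s` only receives goods at which its surplus is maximal, so for `r = s` the average is exactly
the maximum. -/

open Finset

section WeightedAverage

variable {ι : Type*} [Fintype ι] (hne : (univ : Finset ι).Nonempty) {a g : ι → ℝ}

theorem sum_mul_le_sup'_of_sum_eq_one (ha : ∀ t, 0 ≤ a t) (hsum : ∑ t, a t = 1) :
    ∑ t, a t * g t ≤ univ.sup' hne g :=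
  calc ∑ t, a t * g t ≤ ∑ t, a t * univ.sup' hne g :=
        sum_le_sum fun t _ => mul_le_mul_of_nonneg_left (le_sup' g (mem_univ t)) (ha t)
    _ = univ.sup' hne g := by rw [← sum_mul, hsum, one_mul]

theorem sum_mul_eq_sup'_of_sum_eq_one (hsum : ∑ t, a t = 1)
    (hmax : ∀ t, a t ≠ 0 → g t = univ.sup' hne g) :
    ∑ t, a t * g t = univ.sup' hne g :=
  calc ∑ t, a t * g t = ∑ t, a t * univ.sup' hne g := by
        refine sum_congr rfl fun t _ => ?_
        by_cases h : a t = 0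
        · simp [h]
        · rw [hmax t h]
    _ = univ.sup' hne g := by rw [← sum_mul, hsum, one_mul]

theorem sup'_eq_of_le_of_eq {i : ι} {c : ℝ} (hle : ∀ t, g t ≤ c) (hi : g i = c) :
    univ.sup' hne g = c :=
  le_antisymm (sup'_le hne g fun t _ => hle t) (hi ▸ le_sup' g (mem_univ i))

end WeightedAverage

theorem manipulated_mechanism_is_BIC_general
    (ℓ : ℕ) (hne : (Finset.univ : Finset (Fin ℓ)).Nonempty)
    (f : Fin ℓ → ℝ) (hf : ∀ s, 0 < f s)
    (w : Fin ℓ → Fin ℓ → ℝ) (p : Fin ℓ → ℝ)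
    (x : Fin ℓ → Fin ℓ → ℝ)
    (hx0 : ∀ s t, 0 ≤ x s t)
    (hrow : ∀ s, ∑ t, x s t = f s)
    (hef : ∀ s t, 0 < x s t →
      w s t - p t = Finset.univ.sup' hne (fun k => w s k - p k))
    (wt : Fin ℓ → Fin ℓ → ℝ)
    (hwt : ∀ r s, wt r s = ∑ t, (x s t / f s) * w r t)
    (pt : Fin ℓ → ℝ)
    (hpt : ∀ s, pt s = ∑ t, (x s t / f s) * p t) :
    (∀ r s, wt r s - pt s ≤ Finset.univ.sup' hne (fun k => w r k - p k)) ∧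
    (∀ s, wt s s - pt s = Finset.univ.sup' hne (fun k => w s k - p k)) ∧
    (∀ s, wt s s - pt s = Finset.univ.sup' hne (fun t => wt s t - pt t)) := by
  have hsum : ∀ s, ∑ t, x s t / f s = 1 := fun s => by
    rw [← sum_div, hrow, div_self (hf s).ne']
  have hsurplus : ∀ r s, wt r s - pt s = ∑ t, (x s t / f s) * (w r t - p t) := fun r s => by
    simp only [hwt, hpt, mul_sub, sum_sub_distrib]
  have hle : ∀ r s, wt r s - pt s ≤ univ.sup' hne (fun k => w r k - p k) := fun r s => by
    rw [hsurplus]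
    exact sum_mul_le_sup'_of_sum_eq_one hne (fun t => div_nonneg (hx0 s t) (hf s).le) (hsum s)
  have htruthful : ∀ s, wt s s - pt s = univ.sup' hne (fun k => w s k - p k) := fun s => by
    rw [hsurplus]
    refine sum_mul_eq_sup'_of_sum_eq_one hne (hsum s) fun t hst => hef s t ?_
    exact (hx0 s t).lt_of_ne (div_ne_zero_iff.mp hst).1.symm
  refine ⟨hle, htruthful, fun s => ?_⟩
  exact (sup'_eq_of_le_of_eq hne (fun t => (hle s t).trans_eq (htruthful s).symm) rfl).symm

/-- BIC of the manipulated mechanism: averaging values and envy-free prices via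
the kernel `x s t / f s` of a market-clearing welfare-maximizing allocation
yields manipulated values/prices for which truth-telling is optimal. -/
theorem manipulated_mechanism_is_BIC
    (ℓ : ℕ) (hne : (Finset.univ : Finset (Fin ℓ)).Nonempty)
    (f : Fin ℓ → ℝ) (hf : ∀ s, 0 < f s)
    (w : Fin ℓ → Fin ℓ → ℝ) (p : Fin ℓ → ℝ)
    (x : Fin ℓ → Fin ℓ → ℝ)
    (hx0 : ∀ s t, 0 ≤ x s t)
    (hrow : ∀ s, ∑ t, x s t = f s)
    (hcol : ∀ t, ∑ s, x s t = f t)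
    (hef : ∀ s t, 0 < x s t →
      w s t - p t = Finset.univ.sup' hne (fun k => w s k - p k))
    (wt : Fin ℓ → Fin ℓ → ℝ)
    (hwt : ∀ r s, wt r s = ∑ t, (x s t / f s) * w r t)
    (pt : Fin ℓ → ℝ)
    (hpt : ∀ s, pt s = ∑ t, (x s t / f s) * p t) :
    (∀ r s, wt r s - pt s ≤ Finset.univ.sup' hne (fun k => w r k - p k)) ∧
    (∀ s, wt s s - pt s = Finset.univ.sup' hne (fun k => w s k - p k)) ∧
    (∀ s, wt s s - pt s = Finset.univ.sup' hne (fun t => wt s t - pt t)) :=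
  manipulated_mechanism_is_BIC_general ℓ hne f hf w p x hx0 hrow hef wt hwt pt hpt
end

section
/- Let u_max > 0 and u_k = u_max / 2^k for integers k ≥ 0. Let x^{st} ≥ 0 and w^{st} ≥ 0 be finite families with w^{st} ≤ u_max whenever x^{st} > 0. Then ∑_{k=1}^∞ u_k · (∑_{s,t : w^{st} ≥ u_k} x^{st}) ≥ ∑_{s,t} x^{st} w^{st}. -/
/-!
Split the welfare pair by pair. If `0 < w ≤ u_max`, pick `K` with `u_{K+1} < w ≤ u_K`: the grid
levels below `w` are then exactly `u_{K+1}, u_{K+2}, …`, whose geometric sum is `u_K ≥ w`.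
-/

open Finset

lemma summable_div_two_pow_succ (a : ℝ) : Summable fun k : ℕ => a / 2 ^ (k + 1) := by
  simpa [pow_succ, div_div, mul_comm] using summable_geometric_two' a

lemma tsum_div_two_pow_add_succ (a : ℝ) (K : ℕ) :
    ∑' n : ℕ, a / 2 ^ (n + K + 1) = a / 2 ^ K := by
  simpa [pow_succ, pow_add, div_div, mul_comm, mul_left_comm, mul_assoc] using
    tsum_geometric_two' (a / 2 ^ K)

lemma summable_ite_div_two_pow_succ (a w : ℝ) :
    Summable fun k : ℕ => if a / 2 ^ (k + 1) ≤ w then a / 2 ^ (k + 1) else 0 :=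
  (summable_div_two_pow_succ a).indicator {k | a / 2 ^ (k + 1) ≤ w}

lemma ite_div_two_pow_succ_nonneg {a w : ℝ} (hwa : w ≤ a) (k : ℕ) :
    0 ≤ if a / 2 ^ (k + 1) ≤ w then a / 2 ^ (k + 1) else 0 := by
  split_ifs with h
  · have hpow : (1 : ℝ) < 2 ^ (k + 1) := one_lt_pow₀ one_lt_two (Nat.succ_ne_zero k)
    have : a ≤ a * 2 ^ (k + 1) := (div_le_iff₀ (by positivity)).1 (h.trans hwa)
    have ha : 0 ≤ a := by nlinarith
    positivity
  · exact le_rfl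

lemma le_tsum_ite_div_two_pow_succ {a w : ℝ} (hwa : w ≤ a) :
    w ≤ ∑' k : ℕ, if a / 2 ^ (k + 1) ≤ w then a / 2 ^ (k + 1) else 0 := by
  rcases le_or_gt w 0 with hw | hw
  · exact hw.trans (tsum_nonneg (ite_div_two_pow_succ_nonneg hwa))
  obtain ⟨K, hK_le, hK_lt⟩ := exists_nat_pow_near ((one_le_div hw).2 hwa) one_lt_two
  have hlevel : w ≤ a / 2 ^ K := by
    rwa [le_div_iff₀ (by positivity), mul_comm, ← le_div_iff₀ hw]
  have htail (n : ℕ) : a / 2 ^ (n + K + 1) ≤ w :=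
    calc a / 2 ^ (n + K + 1) ≤ a / 2 ^ (K + 1) :=
          div_le_div_of_nonneg_left (hw.le.trans hwa) (by positivity)
            (pow_le_pow_right₀ one_le_two (by omega))
      _ ≤ w := by
          rw [div_le_iff₀ (by positivity), mul_comm]
          exact ((div_lt_iff₀ hw).1 hK_lt).le
  calc w ≤ a / 2 ^ K := hlevel
    _ = ∑' n : ℕ, a / 2 ^ (n + K + 1) := (tsum_div_two_pow_add_succ a K).symm
    _ ≤ _ := by
      rw [← (summable_ite_div_two_pow_succ a w).sum_add_tsum_nat_add K]
      refine le_add_of_nonneg_of_le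
        (sum_nonneg fun k _ => ite_div_two_pow_succ_nonneg hwa k) (le_of_eq ?_)
      exact tsum_congr fun n => by rw [if_pos (htail n)]

lemma mul_le_tsum_div_two_pow_succ_mul_ite {a x w : ℝ} (hx : 0 ≤ x) (hsupp : 0 < x → w ≤ a) :
    x * w ≤ ∑' k : ℕ, a / 2 ^ (k + 1) * if a / 2 ^ (k + 1) ≤ w then x else 0 := by
  rcases hx.eq_or_lt with rfl | hx_pos
  · simp
  simp_rw [mul_ite_zero, ← ite_zero_mul]
  rw [tsum_mul_right, mul_comm x]
  exact mul_le_mul_of_nonneg_right (le_tsum_ite_div_two_pow_succ (hsupp hx_pos)) hx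

theorem geometric_grid_covers_welfare_general
    {ι : Type*} [Fintype ι]
    (umax : ℝ)
    (x w : ι → ℝ)
    (hx : ∀ j, 0 ≤ x j)
    (hsupp : ∀ j, 0 < x j → w j ≤ umax) :
    ∑ j, x j * w j ≤
      ∑' k : ℕ, (umax / 2 ^ (k + 1)) *
        ∑ j ∈ Finset.univ.filter (fun j => umax / 2 ^ (k + 1) ≤ w j), x j := by
  have hsummable (j : ι) : Summable fun k : ℕ =>
      umax / 2 ^ (k + 1) * if umax / 2 ^ (k + 1) ≤ w j then x j else 0 := by
    simpa only [mul_ite_zero, ite_zero_mul] using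
      (summable_ite_div_two_pow_succ umax (w j)).mul_right (x j)
  calc ∑ j, x j * w j
      ≤ ∑ j, ∑' k : ℕ, umax / 2 ^ (k + 1) * if umax / 2 ^ (k + 1) ≤ w j then x j else 0 :=
        sum_le_sum fun j _ => mul_le_tsum_div_two_pow_succ_mul_ite (hx j) (hsupp j)
    _ = ∑' k : ℕ, ∑ j, umax / 2 ^ (k + 1) * if umax / 2 ^ (k + 1) ≤ w j then x j else 0 :=
        (Summable.tsum_finsetSum fun j _ => hsummable j).symm
    _ = _ := tsum_congr fun k => by rw [sum_filter, mul_sum]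

/-- Geometric-grid lower bound in the revenue analysis: summing over price
levels `u_k = u_max / 2^k` (for `k ≥ 1`) the allocation mass of pairs whose
value is at least `u_k`, weighted by `u_k`, covers the full welfare. -/
theorem geometric_grid_covers_welfare
    {ι : Type*} [Fintype ι]
    (umax : ℝ) (humax : 0 < umax)
    (x w : ι → ℝ)
    (hx : ∀ j, 0 ≤ x j) (hw : ∀ j, 0 ≤ w j)
    (hsupp : ∀ j, 0 < x j → w j ≤ umax) :
    ∑ j, x j * w j ≤
      ∑' k : ℕ, (umax / 2 ^ (k + 1)) *
        ∑ j ∈ Finset.univ.filter (fun j => umax / 2 ^ (k + 1) ≤ w j), x j :=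
  geometric_grid_covers_welfare_general umax x w hx hsupp
end

section
/- Consider a single-item, single-agent auction where the agent's value equals 2^k with probability 2^{-k} for k = 1,…,K, and equals 0 with the remaining probability 2^{-K}. The optimal expected social welfare is ∑_{k=1}^K 2^{-k}·2^k = K. However, any mechanism that posts a single price p and sells iff the value is at least p obtains expected revenue at most 2: if p ∈ (2^{j-1}, 2^j], the revenue is p·∑_{k≥j} 2^{-k} ≤ 2^j · 2^{-(j-1)} = 2. Hence the gap between optimal welfare and posted-price revenue is at least K/2 = Ω(log(1/δ)) where δ = 2^{-K} is the granularity. -/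
/-! If the cheapest sold level is `2 ^ j`, then `p ≤ 2 ^ j` while the sale probability is a
geometric tail `∑_{k ≥ j} 2⁻ᵏ ≤ 2 · 2⁻ʲ`, so the revenue is at most `2`. The welfare is `K`
because every level contributes `2⁻ᵏ · 2ᵏ = 1`. -/

open Finset

lemma sum_Icc_one_div_two_pow_le (j K : ℕ) :
    ∑ k ∈ Icc j K, (1 / 2 ^ k : ℝ) ≤ 2 / 2 ^ j := by
  rw [← Ico_add_one_right_eq_Icc, sum_Ico_eq_sum_range]
  calc ∑ i ∈ range (K + 1 - j), (1 / 2 ^ (j + i) : ℝ)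
      = (1 / 2 ^ j) * ∑ i ∈ range (K + 1 - j), (1 / 2 : ℝ) ^ i := by
        rw [mul_sum]
        simp only [pow_add, one_div, mul_inv, inv_pow]
    _ ≤ (1 / 2 ^ j) * 2 := by gcongr; exact sum_geometric_two_le _
    _ = 2 / 2 ^ j := by ring

lemma mul_sum_one_div_two_pow_le_two {s : Finset ℕ} {p : ℝ} (hs : ∀ k ∈ s, p ≤ 2 ^ k) :
    p * ∑ k ∈ s, (1 / 2 ^ k : ℝ) ≤ 2 := by
  rcases s.eq_empty_or_nonempty with rfl | hne
  · simp
  set j := s.min' hne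
  have hsub : s ⊆ Icc j (s.max' hne) := fun k hk =>
    mem_Icc.mpr ⟨s.min'_le k hk, s.le_max' k hk⟩
  have hsum : ∑ k ∈ s, (1 / 2 ^ k : ℝ) ≤ 2 / 2 ^ j :=
    (sum_le_sum_of_subset_of_nonneg hsub fun _ _ _ => by positivity).trans
      (sum_Icc_one_div_two_pow_le _ _)
  calc p * ∑ k ∈ s, (1 / 2 ^ k : ℝ)
      ≤ 2 ^ j * (2 / 2 ^ j) :=
        mul_le_mul (hs j (s.min'_mem hne)) hsum (sum_nonneg fun _ _ => by positivity)
          (by positivity)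
    _ = 2 := by field_simp

theorem posted_price_revenue_gap_general (K : ℕ) :
    (∑ k ∈ Finset.Icc 1 K, (1 / 2 ^ k : ℝ) * 2 ^ k = K) ∧
    (∀ p : ℝ, 0 < p →
      p * ∑ k ∈ (Finset.Icc 1 K).filter (fun k => p ≤ (2 : ℝ) ^ k),
        (1 / 2 ^ k : ℝ) ≤ 2) := by
  refine ⟨?_, fun p _ => mul_sum_one_div_two_pow_le_two fun k hk => (mem_filter.mp hk).2⟩
  simp

/-- Complementary lower bound: for the equal-revenue-style distribution
(`v = 2^k` with probability `2^{-k}` for `k = 1,…,K`, and `v = 0` otherwise),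
the optimal social welfare is `K`, while any posted price `p > 0` obtains
expected revenue at most `2`; hence the welfare-revenue gap is at least
`K - 2 ≥ K/2` for `K ≥ 4`, i.e. `Ω(log(1/δ))` with granularity `δ = 2^{-K}`. -/
theorem posted_price_revenue_gap (K : ℕ) (hK : 1 ≤ K) :
    (∑ k ∈ Finset.Icc 1 K, (1 / 2 ^ k : ℝ) * 2 ^ k = K) ∧
    (∀ p : ℝ, 0 < p →
      p * ∑ k ∈ (Finset.Icc 1 K).filter (fun k => p ≤ (2 : ℝ) ^ k),
        (1 / 2 ^ k : ℝ) ≤ 2) :=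
  posted_price_revenue_gap_general K
end

section
/- Let S be a random variable (the realized allocation) and S̃ a random variable (the tentative allocation) such that conditionally on S̃, we have 0 ≤ v(S) ≤ v(S̃) pointwise and E[v(S) | S̃] ≥ c · v(S̃) for a constant c ∈ (0,1]. Suppose the distribution of S̃ is supported on at most m̄ outcomes, each with probability at least p₀ > 0. Then sd(v(S)) / E[v(S)] ≤ (1/c)·√(1/p₀). In particular, with c = 1/2 and p₀ = ε/(nmℓ), the ratio is at most √(4nmℓ/ε). -/
open MeasureTheory ProbabilityTheory

/-!
Since `0 ≤ Y ≤ a ∘ J`, the variance of `Y` is at most `E[a(J)²] = ∑ⱼ Pⱼ aⱼ²`, where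
`Pⱼ = ℙ(J = j) ≥ p₀`. Every single term satisfies `p₀ aⱼ ≤ Pⱼ aⱼ ≤ S := ∑ⱼ Pⱼ aⱼ`, so
`∑ⱼ Pⱼ aⱼ² ≤ S² / p₀`, and the conditional expectation bound gives `c S ≤ E[Y]`.
-/

lemma sum_mul_sq_le_sq_sum_mul_div {ι : Type*} [Fintype ι] {w a : ι → ℝ} {p₀ : ℝ}
    (hp₀ : 0 < p₀) (hw : ∀ i, p₀ ≤ w i) (ha : ∀ i, 0 ≤ a i) :
    ∑ i, w i * a i ^ 2 ≤ (∑ i, w i * a i) ^ 2 / p₀ := by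
  set S := ∑ i, w i * a i
  have hwa : ∀ i, 0 ≤ w i * a i := fun i => mul_nonneg (hp₀.le.trans (hw i)) (ha i)
  have ha_le : ∀ i, a i ≤ S / p₀ := fun i => by
    rw [le_div_iff₀ hp₀, mul_comm]
    calc p₀ * a i ≤ w i * a i := mul_le_mul_of_nonneg_right (hw i) (ha i)
      _ ≤ S := Finset.single_le_sum (fun j _ => hwa j) (Finset.mem_univ i)
  calc ∑ i, w i * a i ^ 2 = ∑ i, w i * a i * a i := by simp only [sq, mul_assoc]
    _ ≤ ∑ i, w i * a i * (S / p₀) :=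
      Finset.sum_le_sum fun i _ => mul_le_mul_of_nonneg_left (ha_le i) (hwa i)
    _ = S ^ 2 / p₀ := by rw [← Finset.sum_mul]; ring

section Fibers

variable {Ω ι : Type*} [MeasurableSpace Ω] {μ : Measure Ω}
  [MeasurableSpace ι] [MeasurableSingletonClass ι] {J : Ω → ι}

lemma measurableSet_fiber (hJ : Measurable J) (j : ι) : MeasurableSet {ω | J ω = j} :=
  hJ (measurableSet_singleton j)

variable [Fintype ι]

lemma integral_eq_sum_setIntegral_fiber {E : Type*} [NormedAddCommGroup E] [NormedSpace ℝ E]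
    (hJ : Measurable J) {f : Ω → E} (hf : Integrable f μ) :
    ∫ ω, f ω ∂μ = ∑ j, ∫ ω in {ω | J ω = j}, f ω ∂μ := by
  have hcover : (⋃ j, {ω | J ω = j}) = Set.univ := Set.iUnion_eq_univ_iff.2 fun ω => ⟨J ω, rfl⟩
  rw [← integral_iUnion_fintype (measurableSet_fiber hJ) (pairwise_disjoint_fiber J)
      fun _ => hf.integrableOn, hcover, setIntegral_univ]

lemma integrable_comp_of_finite [IsFiniteMeasure μ] (hJ : Measurable J) (g : ι → ℝ) :
    Integrable (fun ω => g (J ω)) μ :=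
  Integrable.of_finite.comp_measurable hJ

lemma integral_comp_eq_sum_measureReal_mul [IsFiniteMeasure μ] (hJ : Measurable J) (g : ι → ℝ) :
    ∫ ω, g (J ω) ∂μ = ∑ j, μ.real {ω | J ω = j} * g j := by
  rw [integral_eq_sum_setIntegral_fiber hJ (integrable_comp_of_finite hJ g)]
  refine Finset.sum_congr rfl fun j _ => ?_
  rw [setIntegral_congr_fun (measurableSet_fiber hJ j) fun ω (hω : J ω = j) => by rw [hω],
    setIntegral_const, smul_eq_mul]

variable {Y : Ω → ℝ} {a : ι → ℝ}

lemma integrable_of_mem_Icc_comp [IsFiniteMeasure μ] (hJ : Measurable J)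
    (hY : AEStronglyMeasurable Y μ) (hbdd : ∀ ω, Y ω ∈ Set.Icc 0 (a (J ω))) :
    Integrable Y μ :=
  (integrable_comp_of_finite hJ a).mono' hY <| .of_forall fun ω => by
    rw [Real.norm_eq_abs, abs_of_nonneg (hbdd ω).1]
    exact (hbdd ω).2

lemma variance_le_sum_measureReal_mul_sq [IsProbabilityMeasure μ] (hJ : Measurable J)
    (hY : AEStronglyMeasurable Y μ) (hbdd : ∀ ω, Y ω ∈ Set.Icc 0 (a (J ω))) :
    variance Y μ ≤ ∑ j, μ.real {ω | J ω = j} * a j ^ 2 := by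
  have hsq_le : ∀ ω, Y ω ^ 2 ≤ a (J ω) ^ 2 := fun ω => pow_le_pow_left₀ (hbdd ω).1 (hbdd ω).2 2
  have hY_sq : Integrable (fun ω => Y ω ^ 2) μ :=
    (integrable_comp_of_finite hJ (a · ^ 2)).mono' (hY.pow 2) <| .of_forall fun ω => by
      rw [Real.norm_eq_abs, abs_of_nonneg (sq_nonneg _)]
      exact hsq_le ω
  calc variance Y μ ≤ ∫ ω, Y ω ^ 2 ∂μ := variance_le_expectation_sq hY
    _ ≤ ∫ ω, a (J ω) ^ 2 ∂μ :=
      integral_mono hY_sq (integrable_comp_of_finite hJ (a · ^ 2)) hsq_le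
    _ = ∑ j, μ.real {ω | J ω = j} * a j ^ 2 :=
      integral_comp_eq_sum_measureReal_mul hJ (a · ^ 2)

lemma mul_sum_measureReal_mul_le_integral [IsFiniteMeasure μ] (hJ : Measurable J)
    (hY : Integrable Y μ) {c : ℝ}
    (hcond : ∀ j, c * a j * μ.real {ω | J ω = j} ≤ ∫ ω in {ω | J ω = j}, Y ω ∂μ) :
    c * ∑ j, μ.real {ω | J ω = j} * a j ≤ ∫ ω, Y ω ∂μ := by
  rw [integral_eq_sum_setIntegral_fiber hJ hY, Finset.mul_sum]
  exact Finset.sum_le_sum fun j _ => by linarith [hcond j]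

end Fibers

/-- Coefficient-of-variation bound: if the realized welfare `Y` satisfies
`0 ≤ Y ≤ a (J ω)` pointwise, the tentative allocation `J` takes at most `mbar`
values each with probability at least `p₀`, and conditionally on each outcome
`j` the expectation of `Y` is at least `c · a j`, then the standard deviation
of `Y` is at most `(1/c)·√(1/p₀)` times its expectation. -/
theorem coefficient_of_variation_bound
    {Ω : Type*} [MeasureSpace Ω] [IsProbabilityMeasure (ℙ : Measure Ω)]
    (mbar : ℕ) (c p₀ : ℝ) (hc : c ∈ Set.Ioc (0 : ℝ) 1) (hp₀ : 0 < p₀)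
    (J : Ω → Fin mbar) (hJ : Measurable J)
    (a : Fin mbar → ℝ) (ha : ∀ j, 0 ≤ a j)
    (Y : Ω → ℝ) (hY : Measurable Y)
    (hbdd : ∀ ω, Y ω ∈ Set.Icc 0 (a (J ω)))
    (hq : ∀ j, ENNReal.ofReal p₀ ≤ ℙ {ω | J ω = j})
    (hcond : ∀ j, c * a j * (ℙ {ω | J ω = j}).toReal ≤ ∫ ω in {ω | J ω = j}, Y ω) :
    Real.sqrt (variance Y ℙ) ≤ (1 / c) * Real.sqrt (1 / p₀) * ∫ ω, Y ω := by
  obtain ⟨hc₀, -⟩ := hc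
  set P : Fin mbar → ℝ := fun j => (ℙ : Measure Ω).real {ω | J ω = j}
  set S := ∑ j, P j * a j
  have hP : ∀ j, p₀ ≤ P j := fun j =>
    (ENNReal.ofReal_le_iff_le_toReal (measure_ne_top _ _)).1 (hq j)
  have hS : 0 ≤ S := Finset.sum_nonneg fun j _ => mul_nonneg (hp₀.le.trans (hP j)) (ha j)
  have hvar : variance Y ℙ ≤ S ^ 2 / p₀ :=
    (variance_le_sum_measureReal_mul_sq hJ hY.aestronglyMeasurable hbdd).trans
      (sum_mul_sq_le_sq_sum_mul_div hp₀ hP ha)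
  have hmean : S ≤ (∫ ω, Y ω) / c := by
    rw [le_div_iff₀ hc₀, mul_comm]
    exact mul_sum_measureReal_mul_le_integral hJ
      (integrable_of_mem_Icc_comp hJ hY.aestronglyMeasurable hbdd) hcond
  have hEY : 0 ≤ ∫ ω, Y ω := integral_nonneg fun ω => (hbdd ω).1
  rw [Real.sqrt_le_iff]
  refine ⟨by positivity, ?_⟩
  calc variance Y ℙ ≤ S ^ 2 / p₀ := hvar
    _ ≤ ((∫ ω, Y ω) / c) ^ 2 / p₀ := by gcongr
    _ = ((1 / c) * Real.sqrt (1 / p₀) * ∫ ω, Y ω) ^ 2 := by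
      rw [mul_pow, mul_pow, Real.sq_sqrt (by positivity)]
      ring
end
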